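/- For all α, β ∈ ℝ with α ≠ β, the residuum of the Gini mean G_{α,β} on ℝ_+ is ξ_{G_{α,β}}(x) = (α+β−1)/x for every x > 0. -/

import Mathlib

open ContinuousLinearMap in
lemma hasFDerivAt_sum_rpow (p : ℕ) (γ : ℝ) (z : Fin p → ℝ) (hz : ∀ i, 0 < z i) :
    HasFDerivAt (fun y : Fin p → ℝ => ∑ i, y i ^ γ)
      (∑ i, (γ * z i ^ (γ - 1)) • (ContinuousLinearMap.proj i : (Fin p → ℝ) →L[ℝ] ℝ)) z :=
  HasFDerivAt.fun_sum fun i _ => by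
    have := (Real.hasDerivAt_rpow_const (p := γ) (Or.inl (hz i).ne')).comp_hasFDerivAt z
      (hasFDerivAt_apply (𝕜 := ℝ) (F' := fun _ : Fin p => ℝ) i z)
    exact this

/-- the residuum of the Gini mean G_{α,β} (α ≠ β) is (α+β−1)/x. -/
theorem residuum_gini (p : ℕ) (hp : 2 ≤ p) (α β : ℝ) (hab : α ≠ β) :
    ∀ x : ℝ, 0 < x →
      -(p : ℝ)^2 * fderiv ℝ (fun z : Fin p → ℝ => fderiv ℝ
          (fun y : Fin p → ℝ => ((∑ i, y i ^ α) / (∑ i, y i ^ β)) ^ (1 / (α - β)))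
          z (Pi.single (⟨1, hp⟩ : Fin p) 1))
        (fun _ => x) (Pi.single (⟨0, by omega⟩ : Fin p) 1)
      = (α + β - 1) / x := by
  intro x hx
  have hp0 : 0 < p := by omega
  have hd : α - β ≠ 0 := sub_ne_zero.2 hab
  set j0 : Fin p := ⟨0, by omega⟩ with hj0
  set j1 : Fin p := ⟨1, hp⟩ with hj1
  set c : ℝ := 1 / (α - β) with hc
  -- the open set of positive vectors
  set U : Set (Fin p → ℝ) := {z | ∀ i, 0 < z i} with hU
  have hUopen : IsOpen U := by
    have : U = Set.pi Set.univ (fun _ : Fin p => Set.Ioi (0:ℝ)) := by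
      ext z; simp [hU, Set.mem_pi]
    rw [this]
    exact isOpen_set_pi Set.finite_univ (fun _ _ => isOpen_Ioi)
  have hz₀U : (fun _ : Fin p => x) ∈ U := fun i => hx
  -- sums are positive on U
  have hSpos : ∀ (γ : ℝ) (z : Fin p → ℝ), z ∈ U → 0 < ∑ i, z i ^ γ := by
    intro γ z hz
    apply Finset.sum_pos (fun i _ => Real.rpow_pos_of_pos (hz i) γ)
    haveI := Fin.pos_iff_nonempty.mp hp0
    exact Finset.univ_nonempty
  -- the explicit first partial derivative
  set g : (Fin p → ℝ) → ℝ := fun z =>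
    c * ((∑ i, z i ^ α) * (∑ i, z i ^ β)⁻¹) ^ (c - 1) *
      ((∑ i, z i ^ α) * (-((∑ i, z i ^ β)^2)⁻¹ * (β * z j1 ^ (β-1))) +
       (∑ i, z i ^ β)⁻¹ * (α * z j1 ^ (α-1))) with hgdef
  -- derivative of the inverse of the β-sum
  have hinv : ∀ z ∈ U, HasFDerivAt (fun y : Fin p → ℝ => (∑ i, y i ^ β)⁻¹)
      ((-((∑ i, z i ^ β)^2)⁻¹) •
        (∑ i, (β * z i ^ (β - 1)) • (ContinuousLinearMap.proj i : (Fin p → ℝ) →L[ℝ] ℝ))) z := by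
    intro z hz
    exact (hasDerivAt_inv (hSpos β z hz).ne').comp_hasFDerivAt z
      (hasFDerivAt_sum_rpow p β z hz)
  have hφ : ∀ z ∈ U, HasFDerivAt (fun y : Fin p → ℝ => (∑ i, y i ^ α) * (∑ i, y i ^ β)⁻¹)
      ((∑ i, z i ^ α) • ((-((∑ i, z i ^ β)^2)⁻¹) •
        (∑ i, (β * z i ^ (β - 1)) • (ContinuousLinearMap.proj i : (Fin p → ℝ) →L[ℝ] ℝ))) +
       (∑ i, z i ^ β)⁻¹ •
        (∑ i, (α * z i ^ (α - 1)) • (ContinuousLinearMap.proj i : (Fin p → ℝ) →L[ℝ] ℝ))) z := by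
    intro z hz
    exact (hasFDerivAt_sum_rpow p α z hz).mul (hinv z hz)
  have hφpos : ∀ z ∈ U, 0 < (∑ i, z i ^ α) * (∑ i, z i ^ β)⁻¹ := by
    intro z hz
    exact mul_pos (hSpos α z hz) (inv_pos.2 (hSpos β z hz))
  -- the value of the inner fderiv on U
  have hgF : ∀ z ∈ U,
      fderiv ℝ (fun y : Fin p → ℝ => ((∑ i, y i ^ α) / (∑ i, y i ^ β)) ^ (1 / (α - β)))
        z (Pi.single j1 1) = g z := by
    intro z hz
    have hF := HasFDerivAt.rpow_const (p := c) (hφ z hz) (Or.inl (hφpos z hz).ne')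
    have hF' : HasFDerivAt
        (fun y : Fin p → ℝ => ((∑ i, y i ^ α) / (∑ i, y i ^ β)) ^ (1 / (α - β)))
        ((c * ((∑ i, z i ^ α) * (∑ i, z i ^ β)⁻¹) ^ (c - 1)) •
          ((∑ i, z i ^ α) • ((-((∑ i, z i ^ β)^2)⁻¹) •
            (∑ i, (β * z i ^ (β - 1)) • (ContinuousLinearMap.proj i : (Fin p → ℝ) →L[ℝ] ℝ))) +
           (∑ i, z i ^ β)⁻¹ •
            (∑ i, (α * z i ^ (α - 1)) • (ContinuousLinearMap.proj i : (Fin p → ℝ) →L[ℝ] ℝ)))) z := by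
      simpa only [div_eq_mul_inv, hc] using hF
    rw [hF'.fderiv]
    simp only [hgdef, ContinuousLinearMap.smul_apply, ContinuousLinearMap.add_apply,
      ContinuousLinearMap.sum_apply, ContinuousLinearMap.proj_apply, Pi.single_apply,
      smul_eq_mul, mul_ite, mul_one, mul_zero, Finset.sum_ite_eq', Finset.mem_univ, if_true]
  have heq : (fun z : Fin p → ℝ => fderiv ℝ
      (fun y : Fin p → ℝ => ((∑ i, y i ^ α) / (∑ i, y i ^ β)) ^ (1 / (α - β)))
      z (Pi.single j1 1)) =ᶠ[nhds (fun _ : Fin p => x)] g := by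
    filter_upwards [hUopen.mem_nhds hz₀U] with z hz using hgF z hz
  rw [heq.fderiv_eq]
  -- now differentiate g at the diagonal point
  set z₀ : Fin p → ℝ := fun _ => x with hz₀def
  have hz0 : ∀ i, 0 < z₀ i := fun _ => hx
  have hSb := hasFDerivAt_sum_rpow p β z₀ hz0
  have hSa := hasFDerivAt_sum_rpow p α z₀ hz0
  have hSbne : (∑ i, z₀ i ^ β) ≠ 0 := (hSpos β z₀ hz₀U).ne'
  have hu := HasFDerivAt.rpow_const (p := c - 1) (hφ z₀ hz₀U) (Or.inl (hφpos z₀ hz₀U).ne')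
  have hq : HasDerivAt (fun t : ℝ => (t ^ 2)⁻¹)
      (-(((∑ i, z₀ i ^ β) ^ 2) ^ 2)⁻¹ * (2 * (∑ i, z₀ i ^ β) ^ 1)) (∑ i, z₀ i ^ β) :=
    HasDerivAt.comp _ (hasDerivAt_inv (pow_ne_zero 2 hSbne)) (hasDerivAt_pow 2 _)
  have hSb2i := hq.comp_hasFDerivAt z₀ hSb
  have hbb : HasFDerivAt (fun y : Fin p → ℝ => β * y j1 ^ (β - 1))
      (β • (((β - 1) * z₀ j1 ^ (β - 1 - 1)) • (ContinuousLinearMap.proj j1 : (Fin p → ℝ) →L[ℝ] ℝ))) z₀ :=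
    (HasFDerivAt.rpow_const (hasFDerivAt_apply j1 z₀) (Or.inl hx.ne')).const_mul β
  have haa : HasFDerivAt (fun y : Fin p → ℝ => α * y j1 ^ (α - 1))
      (α • (((α - 1) * z₀ j1 ^ (α - 1 - 1)) • (ContinuousLinearMap.proj j1 : (Fin p → ℝ) →L[ℝ] ℝ))) z₀ :=
    (HasFDerivAt.rpow_const (hasFDerivAt_apply j1 z₀) (Or.inl hx.ne')).const_mul α
  have hm := (hSb2i.neg).mul hbb
  have hn := (hinv z₀ hz₀U).mul haa
  have hw := (hSa.mul hm).add hn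
  have hgd : HasFDerivAt g _ z₀ := (hu.const_mul c).mul hw
  rw [hgd.fderiv]
  simp only [ContinuousLinearMap.smul_apply, ContinuousLinearMap.add_apply,
    ContinuousLinearMap.sum_apply, ContinuousLinearMap.proj_apply, Pi.single_apply,
    ContinuousLinearMap.neg_apply, smul_eq_mul, mul_ite, mul_one, mul_zero,
    Finset.sum_ite_eq', Finset.mem_univ, if_true]
  have hj : j1 ≠ j0 := by simp [hj0, hj1, Fin.ext_iff]
  simp only [if_neg hj, Function.comp, Pi.mul_apply, Pi.neg_apply, Function.comp_apply, hz₀def, Finset.sum_const, Finset.card_univ,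
    Fintype.card_fin, nsmul_eq_mul, pow_one]
  have hpne : (p:ℝ) ≠ 0 := Nat.cast_ne_zero.2 hp0.ne'
  have hbase : ((p:ℝ) * x ^ α) * ((p:ℝ) * x ^ β)⁻¹ = x ^ (α - β) := by
    rw [Real.rpow_sub hx, mul_inv]
    have := (Real.rpow_pos_of_pos hx β).ne'
    field_simp
  rw [hbase]
  have ha1 : (x ^ (α - β)) ^ (c - 1) = x * x ^ β / x ^ α := by
    rw [← Real.rpow_mul hx.le, show (α - β) * (c - 1) = 1 + (β - α) by
      rw [hc]; field_simp; ring, Real.rpow_add hx, Real.rpow_one, Real.rpow_sub hx]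
    ring
  have ha2 : (x ^ (α - β)) ^ (c - 1 - 1) = x * (x ^ β * x ^ β) / (x ^ α * x ^ α) := by
    rw [← Real.rpow_mul hx.le, show (α - β) * (c - 1 - 1) = 1 + ((β - α) + (β - α)) by
      rw [hc]; field_simp; ring, Real.rpow_add hx, Real.rpow_add hx, Real.rpow_sub hx,
      Real.rpow_one]
    field_simp
  have eα : x ^ (α - 1) = x ^ α / x := by rw [Real.rpow_sub hx, Real.rpow_one]
  have eβ : x ^ (β - 1) = x ^ β / x := by rw [Real.rpow_sub hx, Real.rpow_one]
  rw [ha1, ha2, eα, eβ, hc]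
  have hA : (0:ℝ) < x ^ α := Real.rpow_pos_of_pos hx α
  have hB : (0:ℝ) < x ^ β := Real.rpow_pos_of_pos hx β
  field_simp
  ring
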